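/- arXiv:2410.19555 — 4 statements merged into one kernel-verified Lean document; each statement's English description precedes it below -/
import Mathlib

section
/- For every real c > 0, the ratio n^{⌊c√n⌋} / ((n+1)(n+2)⋯(n+⌊c√n⌋)) converges to exp(−c²/2) as n → ∞. -/
/-!
Writing `k = ⌊c√n⌋` and `tᵢ = (i + 1) / n`, the ratio is `∏_{i<k} (1 + tᵢ)⁻¹ = exp (-∑ log (1 + tᵢ))`.
Since `|log (1 + t) - t| ≤ t² / 2` for `t ≥ 0`, the sum of logarithms differs from
`∑ tᵢ = k (k + 1) / (2n) → c² / 2` by at most `k³ / n² → 0`.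
-/

open Filter Finset Real Topology

lemma Real.abs_log_one_add_sub_self_le {t : ℝ} (ht : 0 ≤ t) : |log (1 + t) - t| ≤ t ^ 2 / 2 := by
  have hupper : log (1 + t) ≤ t := by linarith [log_le_sub_one_of_pos (by linarith : 0 < 1 + t)]
  have hlower : t - t ^ 2 / 2 ≤ log (1 + t) := by
    refine le_trans ?_ (le_log_one_add_of_nonneg ht)
    rw [le_div_iff₀ (by linarith)]
    nlinarith [pow_nonneg ht 3]
  rw [abs_le]
  constructor <;> nlinarith

lemma Finset.sum_range_natCast_add_one (k : ℕ) :
    ∑ i ∈ range k, ((i : ℝ) + 1) = k * (k + 1) / 2 := by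
  induction k with
  | zero => simp
  | succ k ih => rw [sum_range_succ, ih]; push_cast; ring

lemma pow_div_prod_add_eq_exp_neg_sum_log {x : ℝ} (hx : 0 < x) (k : ℕ) :
    x ^ k / ∏ i ∈ range k, (x + i + 1) = exp (-∑ i ∈ range k, log (1 + (i + 1) / x)) := by
  have hfactor : ∀ i ∈ range k, exp (log (1 + (i + 1) / x)) = (x + i + 1) / x := fun i _ => by
    rw [exp_log (by positivity)]
    field_simp
    ring
  rw [exp_neg, exp_sum, prod_congr rfl hfactor, prod_div_distrib, prod_const, card_range, inv_div]

lemma tendsto_inv_sqrt_natCast_atTop : Tendsto (fun n : ℕ => (√n)⁻¹) atTop (𝓝 0) :=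
  tendsto_inv_atTop_zero.comp (tendsto_sqrt_atTop.comp tendsto_natCast_atTop_atTop)

section SqrtScale

variable {k : ℕ → ℕ} {c : ℝ}

lemma tendsto_sum_range_add_one_div (hk : Tendsto (fun n : ℕ => (k n : ℝ) / √n) atTop (𝓝 c)) :
    Tendsto (fun n : ℕ => ∑ i ∈ range (k n), ((i : ℝ) + 1) / n) atTop (𝓝 (c ^ 2 / 2)) := by
  have hlim := ((hk.pow 2).add (hk.mul tendsto_inv_sqrt_natCast_atTop)).div_const 2
  rw [mul_zero, add_zero] at hlim
  refine hlim.congr' ?_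
  filter_upwards [eventually_gt_atTop 0] with n hn
  have hsqrt : (√n : ℝ) ^ 2 = n := sq_sqrt (Nat.cast_nonneg n)
  have hpos : (0 : ℝ) < √n := sqrt_pos.2 (Nat.cast_pos.2 hn)
  rw [← sum_div, sum_range_natCast_add_one]
  field_simp
  rw [hsqrt]

lemma tendsto_sum_log_one_add_sub_sum (hk : Tendsto (fun n : ℕ => (k n : ℝ) / √n) atTop (𝓝 c)) :
    Tendsto (fun n : ℕ => ∑ i ∈ range (k n), log (1 + ((i : ℝ) + 1) / n) -
      ∑ i ∈ range (k n), ((i : ℝ) + 1) / n) atTop (𝓝 0) := by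
  have hbound := ((hk.pow 3).mul tendsto_inv_sqrt_natCast_atTop).div_const 2
  rw [mul_zero, zero_div] at hbound
  refine squeeze_zero_norm' ?_ hbound
  filter_upwards [eventually_gt_atTop 0] with n hn
  have hsqrt : (√n : ℝ) ^ 2 = n := sq_sqrt (Nat.cast_nonneg n)
  have hpos : (0 : ℝ) < √n := sqrt_pos.2 (Nat.cast_pos.2 hn)
  calc ‖∑ i ∈ range (k n), log (1 + ((i : ℝ) + 1) / n) - ∑ i ∈ range (k n), ((i : ℝ) + 1) / n‖
      ≤ ∑ i ∈ range (k n), (((i : ℝ) + 1) / n) ^ 2 / 2 := by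
        rw [← sum_sub_distrib, Real.norm_eq_abs]
        refine (abs_sum_le_sum_abs _ _).trans (sum_le_sum fun i _ => ?_)
        exact abs_log_one_add_sub_self_le (by positivity)
    _ ≤ ∑ _i ∈ range (k n), ((k n : ℝ) / n) ^ 2 / 2 := by
        refine sum_le_sum fun i hi => ?_
        have hi' : (i : ℝ) + 1 ≤ k n := by exact_mod_cast mem_range.1 hi
        gcongr
    _ = ((k n : ℝ) / √n) ^ 3 * (√n)⁻¹ / 2 := by
        rw [sum_const, card_range, nsmul_eq_mul]
        field_simp
        rw [show (√n : ℝ) ^ 4 = n ^ 2 by rw [pow_mul' _ 2 2, hsqrt]]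

theorem tendsto_pow_div_prod_add_of_tendsto_div_sqrt
    (hk : Tendsto (fun n : ℕ => (k n : ℝ) / √n) atTop (𝓝 c)) :
    Tendsto (fun n : ℕ => (n : ℝ) ^ k n / ∏ i ∈ range (k n), ((n : ℝ) + i + 1)) atTop
      (𝓝 (exp (-c ^ 2 / 2))) := by
  have hlog : Tendsto (fun n : ℕ => ∑ i ∈ range (k n), log (1 + ((i : ℝ) + 1) / n)) atTop
      (𝓝 (c ^ 2 / 2)) := by
    simpa using (tendsto_sum_log_one_add_sub_sum hk).add (tendsto_sum_range_add_one_div hk)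
  rw [neg_div]
  refine ((continuous_exp.tendsto _).comp hlog.neg).congr' ?_
  filter_upwards [eventually_gt_atTop 0] with n hn
  exact (pow_div_prod_add_eq_exp_neg_sum_log (Nat.cast_pos.2 hn) (k n)).symm

end SqrtScale

/-- For every `c > 0`, `n^⌊c√n⌋ / ((n+1)(n+2)⋯(n+⌊c√n⌋)) → exp(−c²/2)` as `n → ∞`. -/
theorem pow_div_ascending_prod_tendsto (c : ℝ) (hc : 0 < c) :
    Filter.Tendsto
      (fun n : ℕ =>
        (n : ℝ) ^ (⌊c * Real.sqrt n⌋₊) /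
          ∏ i ∈ Finset.range ⌊c * Real.sqrt n⌋₊, ((n : ℝ) + i + 1))
      Filter.atTop (nhds (Real.exp (-c ^ 2 / 2))) :=
  tendsto_pow_div_prod_add_of_tendsto_div_sqrt
    ((tendsto_nat_floor_mul_div_atTop hc.le).comp
      (tendsto_sqrt_atTop.comp tendsto_natCast_atTop_atTop))
end

section
/- Lemma 1 (truncated first moment of the Irwin–Hall density): for every even positive integer n, ∫_0^{n/2} y f_n(y) dy = n/4 − (n^{n+1} / (n+1)!) · (1/2)^{n+1} · Σ_{j=0}^{n/2} (−1)^j C(n,j) (1 − 2j/n)^{n+1}, where f_n(y) = (1/(n−1)!) Σ_{j=0}^{⌊y⌋} (−1)^j C(n,j) (y − j)^{n−1} for y ∈ [0, n]. -/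
/-!
On `[0, N]` the Irwin–Hall density is the fixed combination
`Σ_{j ≤ N} (-1)^j C(n,j) (y - j)₊^(n-1)` of continuous truncated powers, so its first moment
over `[0, N]` is computed term by term. For `n = 2m` and `N = m` the result involves
`Σ_{j ≤ m} (-1)^j C(2m,j) (m - j)^(2m)`, which is half of the full `2m`-th finite difference
`Σ_{j ≤ 2m} (-1)^j C(2m,j) (m - j)^(2m) = (2m)!`: the terms are symmetric about the vanishing
central one, `j = m`.
-/

open Nat Finset

theorem sum_range_alternating_choose_mul_sub_pow {R : Type*} [CommRing R] (n : ℕ) (x : R) :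
    ∑ j ∈ range (n + 1), (-1) ^ j * (n.choose j : R) * (x - j) ^ n = n ! := by
  have h := congr_fun (fwdDiff_iter_eq_factorial (R := R) (n := n)) (x - n)
  rw [fwdDiff_iter_eq_sum_shift, ← sum_range_reflect, Pi.natCast_apply] at h
  rw [← h]
  refine sum_congr rfl fun j hj => ?_
  have hj : j ≤ n := Nat.lt_succ_iff.mp (mem_range.mp hj)
  rw [add_tsub_cancel_right, Nat.sub_sub_self hj, Nat.choose_symm hj, nsmul_one, Nat.cast_sub hj,
    zsmul_eq_mul]
  push_cast
  ring

theorem sum_range_two_mul_add_one_add_of_symm {M : Type*} [AddCommMonoid M] {m : ℕ}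
    {f : ℕ → M}
    (hf : ∀ x ≤ m, f (m + x) = f (m - x)) :
    ∑ j ∈ range (2 * m + 1), f j + f m = 2 • ∑ j ∈ range (m + 1), f j := by
  have hupper : ∑ x ∈ range (m + 1), f (m + x) = ∑ j ∈ range (m + 1), f j := by
    rw [← sum_range_reflect]
    refine sum_congr rfl fun x hx => ?_
    have hx : x ≤ m := Nat.lt_succ_iff.mp (mem_range.mp hx)
    rw [add_tsub_cancel_right, hf (m - x) (Nat.sub_le m x), Nat.sub_sub_self hx]
  rw [show 2 * m + 1 = m + (m + 1) by ring, sum_range_add, hupper, add_right_comm,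
    ← sum_range_succ, two_nsmul]

theorem two_mul_sum_range_alternating_choose_mul_half_sub_pow {R : Type*} [CommRing R] {m : ℕ}
    (hm : 0 < m) :
    2 * ∑ j ∈ range (m + 1), (-1) ^ j * ((2 * m).choose j : R) * (m - j) ^ (2 * m)
      = (2 * m)! := by
  set f : ℕ → R := fun j => (-1) ^ j * ((2 * m).choose j : R) * (m - j) ^ (2 * m)
  have hsymm : ∀ x ≤ m, f (m + x) = f (m - x) := by
    intro x hx
    have hsign : ((-1) ^ (m + x) : R) = (-1) ^ (m - x) := by
      rw [show m + x = m - x + 2 * x by omega, pow_add, pow_mul]; simp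
    simp only [f, hsign, Nat.choose_symm_of_eq_add (show 2 * m = (m + x) + (m - x) by omega),
      Nat.cast_add, Nat.cast_sub hx, sub_add_cancel_left, sub_sub_cancel, (even_two_mul m).neg_pow]
  have hcenter : f m = 0 := by simp [f, hm.ne']
  have h := sum_range_two_mul_add_one_add_of_symm hsymm
  rw [hcenter, add_zero, sum_range_alternating_choose_mul_sub_pow, two_nsmul] at h
  rw [h, two_mul]

theorem sum_range_floor_add_one_eq_sum_mul_max_sub_pow {k N : ℕ} (hk : k ≠ 0) (a : ℕ → ℝ)
    {y : ℝ} (hy₀ : 0 ≤ y) (hyN : y < N + 1) :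
    ∑ j ∈ range (⌊y⌋₊ + 1), a j * (y - j) ^ k
      = ∑ j ∈ range (N + 1), a j * max (y - j) 0 ^ k := by
  have hfloor : ⌊y⌋₊ + 1 ≤ N + 1 := by
    have := Nat.floor_lt hy₀ |>.mpr (by exact_mod_cast hyN); omega
  rw [← sum_range_add_sum_Ico _ hfloor, sum_eq_zero (s := Ico _ _), add_zero]
  · refine sum_congr rfl fun j hj => ?_
    have : (j : ℝ) ≤ y :=
      (Nat.cast_le.mpr (Nat.lt_succ_iff.mp (mem_range.mp hj))).trans (Nat.floor_le hy₀)
    rw [max_eq_left (sub_nonneg.mpr this)]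
  · intro j hj
    have : y < j := (Nat.lt_floor_add_one y).trans_le (by exact_mod_cast (mem_Ico.mp hj).1)
    rw [max_eq_right (sub_nonpos.mpr this.le), zero_pow hk, mul_zero]

theorem integral_mul_max_sub_pow {a b : ℝ} (k : ℕ) (ha : 0 ≤ a) (hab : a ≤ b) :
    ∫ y in (0 : ℝ)..b, y * max (y - a) 0 ^ (k + 1)
      = (b - a) ^ (k + 3) / (k + 3) + a * (b - a) ^ (k + 2) / (k + 2) := by
  have hcont : Continuous fun y : ℝ => y * max (y - a) 0 ^ (k + 1) := by fun_prop
  rw [← intervalIntegral.integral_add_adjacent_intervals (b := a)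
    (hcont.intervalIntegrable _ _) (hcont.intervalIntegrable _ _)]
  have hlow : ∫ y in (0 : ℝ)..a, y * max (y - a) 0 ^ (k + 1) = 0 := by
    rw [intervalIntegral.integral_congr (g := fun _ => 0) fun y hy => ?_,
      intervalIntegral.integral_zero]
    rw [Set.uIcc_of_le ha] at hy
    simp [max_eq_right (sub_nonpos.mpr hy.2)]
  have hhigh : ∫ y in a..b, y * max (y - a) 0 ^ (k + 1)
      = ∫ y in a..b, ((y - a) ^ (k + 2) + a * (y - a) ^ (k + 1)) := by
    refine intervalIntegral.integral_congr fun y hy => ?_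
    rw [Set.uIcc_of_le hab] at hy
    simp only [max_eq_left (sub_nonneg.mpr hy.1)]
    ring
  rw [hlow, hhigh, zero_add,
    intervalIntegral.integral_comp_sub_right (fun u => u ^ (k + 2) + a * u ^ (k + 1)),
    intervalIntegral.integral_add ((continuous_pow _).intervalIntegrable _ _)
      ((by fun_prop : Continuous fun u : ℝ => a * u ^ (k + 1)).intervalIntegrable _ _),
    intervalIntegral.integral_const_mul, integral_pow, integral_pow]
  push_cast
  ring_nf

noncomputable def irwinHallDensity (n : ℕ) (y : ℝ) : ℝ :=
  (1 / ((n - 1)! : ℝ)) *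
    ∑ j ∈ range (⌊y⌋₊ + 1), (-1 : ℝ) ^ j * (n.choose j : ℝ) * (y - j) ^ (n - 1)

theorem integral_mul_irwinHallDensity_natCast {n : ℕ} (hn : 2 ≤ n) (N : ℕ) :
    ∫ y in (0 : ℝ)..N, y * irwinHallDensity n y
      = 1 / ((n - 1)! : ℝ) * ∑ j ∈ range (N + 1), (-1) ^ j * (n.choose j : ℝ) *
          ((N - j) ^ (n + 1) / (n + 1) + j * (N - j) ^ n / n) := by
  obtain ⟨k, rfl⟩ : ∃ k, n = k + 2 := ⟨n - 2, by omega⟩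
  have htrunc : ∀ y ∈ Set.uIcc (0 : ℝ) N, y * irwinHallDensity (k + 2) y
      = 1 / ((k + 1)! : ℝ) * ∑ j ∈ range (N + 1),
          (-1) ^ j * ((k + 2).choose j : ℝ) * (y * max (y - j) 0 ^ (k + 1)) := by
    intro y hy
    rw [Set.uIcc_of_le N.cast_nonneg] at hy
    rw [irwinHallDensity, show k + 2 - 1 = k + 1 by omega,
      sum_range_floor_add_one_eq_sum_mul_max_sub_pow k.add_one_ne_zero _ hy.1
      (hy.2.trans_lt (lt_add_one _)), mul_sum, mul_sum, mul_sum]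
    exact sum_congr rfl fun j _ => by ring
  rw [intervalIntegral.integral_congr htrunc, intervalIntegral.integral_const_mul,
    intervalIntegral.integral_finsetSum fun j _ => (by fun_prop : Continuous fun y : ℝ =>
      (-1) ^ j * ((k + 2).choose j : ℝ) * (y * max (y - j) 0 ^ (k + 1))).intervalIntegrable _ _]
  congr 1
  refine sum_congr rfl fun j hj => ?_
  rw [intervalIntegral.integral_const_mul, integral_mul_max_sub_pow k j.cast_nonneg
    (Nat.cast_le.mpr (Nat.lt_succ_iff.mp (mem_range.mp hj)))]
  push_cast
  ring_nf

theorem integral_mul_irwinHallDensity_half {m : ℕ} (hm : 0 < m) :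
    ∫ y in (0 : ℝ)..m, y * irwinHallDensity (2 * m) y
      = m / 2 - 1 / ((2 * m + 1)! : ℝ) *
          ∑ j ∈ range (m + 1), (-1) ^ j * ((2 * m).choose j : ℝ) * (m - j) ^ (2 * m + 1) := by
  rw [integral_mul_irwinHallDensity_natCast (by omega)]
  -- `j (m - j)^(2m) = m (m - j)^(2m) - (m - j)^(2m+1)` brings in the half finite difference
  have hterm : ∀ j : ℕ, (-1) ^ j * ((2 * m).choose j : ℝ) *
      ((m - j) ^ (2 * m + 1) / (2 * m + 1) + j * (m - j) ^ (2 * m) / (2 * m))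
      = (1 / (2 * m + 1) - 1 / (2 * m)) *
          ((-1) ^ j * ((2 * m).choose j : ℝ) * (m - j) ^ (2 * m + 1))
        + m / (2 * m) * ((-1) ^ j * ((2 * m).choose j : ℝ) * (m - j) ^ (2 * m)) := fun j => by
    ring
  have hS : ∑ j ∈ range (m + 1), (-1) ^ j * ((2 * m).choose j : ℝ) * (m - j) ^ (2 * m)
      = m * (2 * m - 1)! := by
    have h := two_mul_sum_range_alternating_choose_mul_half_sub_pow (R := ℝ) hm
    rw [← Nat.mul_factorial_pred (n := 2 * m) (by omega)] at h
    push_cast at h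
    linarith
  have hfact : ((2 * m - 1)! : ℝ) ≠ 0 := by positivity
  push_cast
  rw [sum_congr rfl fun j _ => hterm j, sum_add_distrib, ← mul_sum, ← mul_sum, hS,
    Nat.factorial_succ, ← Nat.mul_factorial_pred (n := 2 * m) (by omega)]
  push_cast
  field_simp
  ring

/-- Lemma 1: truncated first moment of the Irwin–Hall density. For even positive `n`,
`∫_0^{n/2} y f_n(y) dy = n/4 − (n^{n+1}/(n+1)!) (1/2)^{n+1} Σ_{j=0}^{n/2} (−1)^j C(n,j) (1−2j/n)^{n+1}`,
where `f_n(y) = (1/(n−1)!) Σ_{j=0}^{⌊y⌋} (−1)^j C(n,j) (y−j)^{n−1}`. -/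
theorem irwin_hall_truncated_first_moment (n : ℕ) (hn : 0 < n) (hev : Even n) :
    (∫ y in (0 : ℝ)..((n : ℝ) / 2),
        y * ((1 / ((n - 1)! : ℝ)) *
          ∑ j ∈ Finset.range (⌊y⌋₊ + 1),
            (-1 : ℝ) ^ j * (n.choose j : ℝ) * (y - (j : ℝ)) ^ (n - 1)))
      = (n : ℝ) / 4 -
          ((n : ℝ) ^ (n + 1) / ((n + 1)! : ℝ)) * (1 / 2) ^ (n + 1) *
            ∑ j ∈ Finset.range (n / 2 + 1),
              (-1 : ℝ) ^ j * (n.choose j : ℝ) * (1 - 2 * (j : ℝ) / (n : ℝ)) ^ (n + 1) := by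
  obtain ⟨m, rfl⟩ := hev.two_dvd
  have hm : 0 < m := by omega
  have hrescale :
      ((2 * m : ℕ) : ℝ) ^ (2 * m + 1) / ((2 * m + 1)! : ℝ) * (1 / 2) ^ (2 * m + 1) *
      ∑ j ∈ range (m + 1),
        (-1) ^ j * ((2 * m).choose j : ℝ) * (1 - 2 * (j : ℝ) / (2 * m : ℕ)) ^ (2 * m + 1)
      = 1 / ((2 * m + 1)! : ℝ) *
          ∑ j ∈ range (m + 1), (-1) ^ j * ((2 * m).choose j : ℝ) * (m - j) ^ (2 * m + 1) := by
    rw [mul_sum, mul_sum]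
    refine sum_congr rfl fun j _ => ?_
    have : ((2 * m : ℕ) : ℝ) * (1 / 2) * (1 - 2 * (j : ℝ) / (2 * m : ℕ)) = m - j := by
      push_cast; field_simp
    rw [← this, mul_pow, mul_pow]
    ring
  rw [Nat.mul_div_cancel_left m two_pos, hrescale]
  change ∫ y in (0 : ℝ)..(2 * m : ℕ) / 2, y * irwinHallDensity (2 * m) y = _
  rw [show ((2 * m : ℕ) : ℝ) / 2 = m by push_cast; ring, integral_mul_irwinHallDensity_half hm]
  push_cast
  ring
end

section
/- For every even positive integer n, ∫_0^{n/2} F_n(y) dy = (1/(n+1)!) · Σ_{j=0}^{n/2} (−1)^j C(n,j) (n/2 − j)^{n+1}, where F_n(y) = (1/n!) Σ_{j=0}^{⌊y⌋} (−1)^j C(n,j) (y − j)^n for y ∈ [0, n]. -/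
/-!
On `[0, x]` the sum over `j ≤ ⌊y⌋` equals the fixed sum over `j ≤ ⌊x⌋` of the truncated powers
`𝟙[j ≤ y] (y - j)^n`, each of which integrates to `(x - j)^(n+1) / (n+1)`. Taking `x = n/2` and
using `(n+1) n! = (n+1)!` gives the formula.
-/

open Filter Real Nat MeasureTheory

section

open Set

theorem integral_indicator_Ici_sub_pow {a x : ℝ} (ha : 0 ≤ a) (hax : a ≤ x) (p : ℕ) :
    ∫ y in (0 : ℝ)..x, (Ici a).indicator (fun y ↦ (y - a) ^ p) y = (x - a) ^ (p + 1) / (p + 1) := by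
  have hIoc : (Ioc 0 x ∩ Ici a : Set ℝ) =ᵐ[volume] Ioc a x := by
    have h := (ae_eq_refl (Ioc 0 x)).inter (Ioi_ae_eq_Ici (μ := volume) (a := a)).symm
    rwa [Ioc_inter_Ioi, max_eq_right ha] at h
  rw [intervalIntegral.integral_of_le (ha.trans hax), setIntegral_indicator measurableSet_Ici,
    setIntegral_congr_set hIoc, ← intervalIntegral.integral_of_le hax,
    intervalIntegral.integral_comp_sub_right (· ^ p), integral_pow]
  simp

theorem sum_range_floor_eq_sum_indicator (c : ℕ → ℝ) (p : ℕ) {x y : ℝ} (hy : 0 ≤ y) (hyx : y ≤ x) :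
    ∑ j ∈ Finset.range (⌊y⌋₊ + 1), c j * (y - j) ^ p
      = ∑ j ∈ Finset.range (⌊x⌋₊ + 1), c j * (Ici (j : ℝ)).indicator (fun y ↦ (y - j) ^ p) y := by
  have hsub : Finset.range (⌊y⌋₊ + 1) ⊆ Finset.range (⌊x⌋₊ + 1) :=
    Finset.range_subset_range.mpr (Nat.succ_le_succ (Nat.floor_mono hyx))
  rw [← Finset.sum_subset hsub]
  · refine Finset.sum_congr rfl fun j hj ↦ ?_
    have hjy : (j : ℝ) ≤ y := (Nat.le_floor_iff hy).mp (Finset.mem_range_succ_iff.mp hj)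
    rw [indicator_of_mem (mem_Ici.mpr hjy)]
  · intro j _ hj
    have hjy : ¬ (j : ℝ) ≤ y := fun h ↦
      hj (Finset.mem_range_succ_iff.mpr ((Nat.le_floor_iff hy).mpr h))
    rw [indicator_of_notMem (by simpa using hjy), mul_zero]

theorem integral_sum_range_floor_mul_sub_pow (c : ℕ → ℝ) (p : ℕ) {x : ℝ} (hx : 0 ≤ x) :
    ∫ y in (0 : ℝ)..x, ∑ j ∈ Finset.range (⌊y⌋₊ + 1), c j * (y - j) ^ p
      = ∑ j ∈ Finset.range (⌊x⌋₊ + 1), c j * ((x - j) ^ (p + 1) / (p + 1)) := by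
  have hint (j : ℕ) : IntervalIntegrable
      (fun y ↦ c j * (Ici (j : ℝ)).indicator (fun y ↦ (y - j) ^ p) y) volume 0 x := by
    have hcont : Continuous fun y : ℝ ↦ (y - j) ^ p := by fun_prop
    exact (intervalIntegrable_iff_integrableOn_Ioc_of_le hx).mpr
      (Integrable.const_mul (hcont.integrableOn_Ioc.indicator measurableSet_Ici) (c j))
  calc _ = ∫ y in (0 : ℝ)..x,
        ∑ j ∈ Finset.range (⌊x⌋₊ + 1), c j * (Ici (j : ℝ)).indicator (fun y ↦ (y - j) ^ p) y :=
        intervalIntegral.integral_congr fun y hy ↦ by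
          rw [uIcc_of_le hx] at hy
          exact sum_range_floor_eq_sum_indicator c p hy.1 hy.2
    _ = _ := by
        rw [intervalIntegral.integral_finsetSum fun j _ ↦ hint j]
        refine Finset.sum_congr rfl fun j hj ↦ ?_
        have hjx : (j : ℝ) ≤ x := (Nat.le_floor_iff hx).mp (Finset.mem_range_succ_iff.mp hj)
        rw [intervalIntegral.integral_const_mul, integral_indicator_Ici_sub_pow j.cast_nonneg hjx]

end

theorem irwin_hall_cdf_integral_general (n : ℕ) :
    (∫ y in (0 : ℝ)..((n : ℝ) / 2),
        (1 / (n ! : ℝ)) *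
          ∑ j ∈ Finset.range (⌊y⌋₊ + 1),
            (-1 : ℝ) ^ j * (n.choose j : ℝ) * (y - (j : ℝ)) ^ n)
      = (1 / ((n + 1)! : ℝ)) *
          ∑ j ∈ Finset.range (n / 2 + 1),
            (-1 : ℝ) ^ j * (n.choose j : ℝ) * ((n : ℝ) / 2 - (j : ℝ)) ^ (n + 1) := by
  have hfloor : ⌊(n : ℝ) / 2⌋₊ = n / 2 := by exact_mod_cast Nat.floor_div_eq_div n 2
  rw [intervalIntegral.integral_const_mul,
    integral_sum_range_floor_mul_sub_pow (fun j ↦ (-1 : ℝ) ^ j * (n.choose j : ℝ)) n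
      (by positivity), hfloor, Finset.mul_sum, Finset.mul_sum]
  refine Finset.sum_congr rfl fun j _ ↦ ?_
  rw [Nat.factorial_succ]
  push_cast
  field_simp

/-- For even positive `n`,
`∫_0^{n/2} F_n(y) dy = (1/(n+1)!) Σ_{j=0}^{n/2} (−1)^j C(n,j) (n/2 − j)^{n+1}`,
where `F_n(y) = (1/n!) Σ_{j=0}^{⌊y⌋} (−1)^j C(n,j) (y−j)^n`. -/
theorem irwin_hall_cdf_integral (n : ℕ) (hn : 0 < n) (hev : Even n) :
    (∫ y in (0 : ℝ)..((n : ℝ) / 2),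
        (1 / (n ! : ℝ)) *
          ∑ j ∈ Finset.range (⌊y⌋₊ + 1),
            (-1 : ℝ) ^ j * (n.choose j : ℝ) * (y - (j : ℝ)) ^ n)
      = (1 / ((n + 1)! : ℝ)) *
          ∑ j ∈ Finset.range (n / 2 + 1),
            (-1 : ℝ) ^ j * (n.choose j : ℝ) * ((n : ℝ) / 2 - (j : ℝ)) ^ (n + 1) :=
  irwin_hall_cdf_integral_general n
end

section
/- For every positive integer n, the series Σ_{j=0}^∞ |j − n| · e^{-n} n^j / j! converges and equals 2 e^{-n} n^{n+1} / n!; that is, the mean absolute deviation of a Poisson(n) random variable about n equals 2 e^{-n} n^{n+1} / n!. -/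
/-!
With `b j = j xʲ / j!` one has `(x - j) xʲ / j! = b (j + 1) - b j`, so the series
`Σ |j - x| xʲ / j!` telescopes on both sides of `x`. If `m ≤ x ≤ m + 1`, the terms with `j ≤ m`
sum to `b (m + 1)`, and since `b → 0` the terms with `j > m` sum to `b (m + 1)` as well; finally
`b (m + 1) = x^(m+1) / m!`. Multiplying by `e^{-x}` gives `E|Y - x| = 2 e^{-x} x^(m+1) / m!`
for `Y ~ Poisson(x)`.
-/

open Filter Topology Finset Nat

theorem HasSum.sub_succ_of_antitone {b : ℕ → ℝ} {a : ℝ} (hb : Antitone b)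
    (h : Tendsto b atTop (𝓝 a)) : HasSum (fun j => b j - b (j + 1)) (b 0 - a) := by
  rw [hasSum_iff_tendsto_nat_of_nonneg (fun j => sub_nonneg.2 (hb j.le_succ))]
  simpa only [sum_range_sub'] using tendsto_const_nhds.sub h

section PoissonTelescope

variable (x : ℝ)

lemma sub_mul_pow_div_factorial (j : ℕ) :
    (x - j) * (x ^ j / j !) = (j + 1 : ℕ) * x ^ (j + 1) / (j + 1)! - j * x ^ j / j ! := by
  rw [factorial_succ]
  push_cast
  field_simp
  ring

lemma succ_mul_pow_succ_div_factorial (j : ℕ) :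
    (j + 1 : ℕ) * x ^ (j + 1) / (j + 1)! = x * (x ^ j / j !) := by
  rw [factorial_succ]
  push_cast
  field_simp
  ring

lemma tendsto_mul_pow_div_factorial :
    Tendsto (fun j : ℕ => j * x ^ j / j !) atTop (𝓝 0) := by
  rw [← tendsto_add_atTop_iff_nat 1]
  simpa only [succ_mul_pow_succ_div_factorial, mul_zero] using
    (FloorSemiring.tendsto_pow_div_factorial_atTop x).const_mul x

theorem hasSum_abs_sub_mul_pow_div_factorial {m : ℕ} (hm : (m : ℝ) ≤ x) (hx : x ≤ m + 1) :
    HasSum (fun j : ℕ => |(j : ℝ) - x| * (x ^ j / j !)) (2 * x ^ (m + 1) / m !) := by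
  obtain ⟨b, hb⟩ : ∃ b : ℕ → ℝ, ∀ j, b j = j * x ^ j / j ! := ⟨_, fun _ => rfl⟩
  have hx₀ : 0 ≤ x := m.cast_nonneg.trans hm
  have below {j : ℕ} (hj : (j : ℝ) ≤ x) : |(j : ℝ) - x| * (x ^ j / j !) = b (j + 1) - b j := by
    rw [abs_sub_comm, abs_of_nonneg (sub_nonneg.2 hj), sub_mul_pow_div_factorial, hb, hb]
  have above {j : ℕ} (hj : x ≤ j) : |(j : ℝ) - x| * (x ^ j / j !) = b j - b (j + 1) := by
    rw [abs_of_nonneg (sub_nonneg.2 hj), ← neg_sub, neg_mul, sub_mul_pow_div_factorial, neg_sub,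
      hb, hb]
  have head : ∑ j ∈ range (m + 1), |(j : ℝ) - x| * (x ^ j / j !) = b (m + 1) := by
    rw [sum_congr rfl fun j hj => below ?_, sum_range_sub]
    · simp [hb]
    · exact (Nat.cast_le.2 (Nat.lt_succ_iff.1 (mem_range.1 hj))).trans hm
  have tail : HasSum (fun j => |((j + (m + 1) : ℕ) : ℝ) - x| * (x ^ (j + (m + 1)) / (j + (m + 1))!))
      (b (m + 1)) := by
    have tail_above (j : ℕ) : x ≤ ((j + (m + 1) : ℕ) : ℝ) := by
      push_cast
      linarith [j.cast_nonneg (α := ℝ)]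
    have anti : Antitone fun j => b (j + (m + 1)) := antitone_nat_of_succ_le fun j => by
      rw [← sub_nonneg, add_right_comm, ← above (tail_above j)]
      positivity
    have lim : Tendsto b atTop (𝓝 0) := by
      rw [funext hb]
      exact tendsto_mul_pow_div_factorial x
    simpa only [above (tail_above _), add_right_comm, zero_add, sub_zero] using
      HasSum.sub_succ_of_antitone anti (lim.comp (tendsto_add_atTop_nat (m + 1)))
  have hbm : b (m + 1) = x ^ (m + 1) / m ! := by
    rw [hb, succ_mul_pow_succ_div_factorial, _root_.pow_succ', mul_div_assoc]
  have whole :=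
    (hasSum_nat_add_iff (f := fun j : ℕ => |(j : ℝ) - x| * (x ^ j / j !)) (m + 1)).1 tail
  rwa [head, hbm, ← two_mul, ← mul_div_assoc] at whole

end PoissonTelescope

theorem poisson_mean_abs_deviation_general (n : ℕ) :
    HasSum (fun j : ℕ => |(j : ℝ) - (n : ℝ)| * (Real.exp (-(n : ℝ)) * (n : ℝ) ^ j / j !))
      (2 * Real.exp (-(n : ℝ)) * (n : ℝ) ^ (n + 1) / n !) := by
  have h : HasSum (fun j : ℕ => Real.exp (-(n : ℝ)) * (|(j : ℝ) - n| * ((n : ℝ) ^ j / j !)))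
      (Real.exp (-(n : ℝ)) * (2 * (n : ℝ) ^ (n + 1) / n !)) :=
    (hasSum_abs_sub_mul_pow_div_factorial (n : ℝ) le_rfl (by linarith)).mul_left _
  convert h using 1
  · ext j
    ring
  · ring

/-- The mean absolute deviation of a Poisson(n) variable about `n`:
`Σ_{j=0}^∞ |j − n| e^{-n} n^j / j!` converges and equals `2 e^{-n} n^{n+1} / n!`. -/
theorem poisson_mean_abs_deviation (n : ℕ) (hn : 0 < n) :
    HasSum (fun j : ℕ => |(j : ℝ) - (n : ℝ)| * (Real.exp (-(n : ℝ)) * (n : ℝ) ^ j / j !))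
      (2 * Real.exp (-(n : ℝ)) * (n : ℝ) ^ (n + 1) / n !) :=
  poisson_mean_abs_deviation_general n
end
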